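/- For every p = 6^ℓ with ℓ ≥ 1, every y ∈ 𝕋, and every positive integer n, the Bowen ball satisfies μ(B_n(y, 1/6)) = 3^{−n}, where B_n is taken with respect to the map f_p : x ↦ px on 𝕋. -/
import Mathlib


open MeasureTheory ENNReal

/-- The `×p` map `x ↦ p • x` on the circle `ℝ/ℤ`. -/
noncomputable def timesMap (p : ℕ) : UnitAddCircle → UnitAddCircle := fun x => p • x

/-- The open Bowen ball `B_n(x, ε)` of the map `f`. -/
def bowenBall (f : UnitAddCircle → UnitAddCircle) (n : ℕ) (x : UnitAddCircle)
    (ε : ℝ) : Set UnitAddCircle :=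
  {y | ∀ i < n, dist (f^[i] x) (f^[i] y) < ε}

open Set

namespace BowenAux

/-- The centered Bowen set. -/
def S (p n : ℕ) : Set UnitAddCircle := {w | ∀ i < n, ‖(p ^ i) • w‖ < 1/6}

/-- Its lift to `ℝ`. -/
def E (p n : ℕ) : Set ℝ := {x | ∀ i < n, ‖(((p : ℝ) ^ i * x : ℝ) : UnitAddCircle)‖ < 1/6}

lemma nsmul_coe (k : ℕ) (x : ℝ) :
    (k • ((x : ℝ) : UnitAddCircle)) = (((k : ℝ) * x : ℝ) : UnitAddCircle) := by
  push_cast [← AddCircle.coe_nsmul]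
  norm_num [nsmul_eq_mul]

lemma measurableSet_S (p n : ℕ) : MeasurableSet (S p n) := by
  have h : S p n = ⋂ i ∈ Finset.range n, {w : UnitAddCircle | ‖(p ^ i) • w‖ < 1/6} := by
    ext w; simp [S]
  rw [h]
  refine Finset.measurableSet_biInter _ fun i _ => ?_
  exact (isOpen_lt (continuous_nsmul (p ^ i)).norm continuous_const).measurableSet

lemma preimage_S (p n : ℕ) : ((↑) : ℝ → UnitAddCircle) ⁻¹' S p n = E p n := by
  ext x
  simp only [S, E, Set.mem_preimage, Set.mem_setOf_eq]
  refine forall₂_congr fun i _ => ?_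
  rw [nsmul_coe]
  push_cast
  rfl

lemma measurableSet_E (p n : ℕ) : MeasurableSet (E p n) := by
  rw [← preimage_S]
  exact (measurableSet_S p n).preimage (AddCircle.continuous_mk' 1).measurable

lemma vol_S_eq (p n : ℕ) (t : ℝ) :
    volume (S p n) = volume (E p n ∩ Ioc t (t + 1)) := by
  rw [← preimage_S]
  simpa using AddCircle.add_projection_respects_measure (T := 1) t (measurableSet_S p n)

lemma E_succ (p n : ℕ) :
    E p (n + 1) = E p 1 ∩ (fun x => (p : ℝ) * x) ⁻¹' E p n := by
  ext x
  simp only [E, Set.mem_inter_iff, Set.mem_preimage, Set.mem_setOf_eq]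
  constructor
  · intro h
    refine ⟨fun i hi => ?_, fun i hi => ?_⟩
    · interval_cases i; exact h 0 (by omega)
    · have h' := h (i + 1) (by omega)
      rwa [show (p : ℝ) ^ (i + 1) * x = (p : ℝ) ^ i * ((p : ℝ) * x) by ring] at h'
  · rintro ⟨h0, h⟩ i hi
    rcases i with _ | j
    · exact h0 0 (by omega)
    · have h' := h j (by omega)
      rwa [show (p : ℝ) ^ j * ((p : ℝ) * x) = (p : ℝ) ^ (j + 1) * x by ring] at h'

lemma mem_E_one (p : ℕ) (x : ℝ) : x ∈ E p 1 ↔ |x - round x| < 1/6 := by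
  simp only [E, Set.mem_setOf_eq]
  constructor
  · intro h
    have h' := h 0 (by norm_num)
    simpa [UnitAddCircle.norm_eq] using h'
  · intro h i hi
    interval_cases i
    simpa [UnitAddCircle.norm_eq] using h

lemma E_one_inter (p : ℕ) :
    E p 1 ∩ Ioc (-(1/6) : ℝ) (5/6) = Ioo (-(1/6) : ℝ) (1/6) := by
  ext x
  simp only [mem_inter_iff, mem_E_one, mem_Ioc, mem_Ioo]
  constructor
  · rintro ⟨h, h1, h2⟩
    refine ⟨h1, ?_⟩
    by_contra hx
    push_neg at hx
    rcases le_or_gt (round x) 0 with hk | hk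
    · have hk' : ((round x : ℤ) : ℝ) ≤ 0 := by exact_mod_cast hk
      have : (1 : ℝ)/6 ≤ x - round x := by linarith
      linarith [le_abs_self (x - (round x : ℝ))]
    · have hk' : (1 : ℝ) ≤ ((round x : ℤ) : ℝ) := by exact_mod_cast hk
      have : (1 : ℝ)/6 ≤ (round x : ℝ) - x := by linarith
      linarith [neg_abs_le (x - (round x : ℝ))]
  · rintro ⟨h1, h2⟩
    have hr : round x = 0 := by
      rw [round_eq_zero_iff]
      simp only [Set.mem_Ico]
      constructor <;> [linarith; linarith]
    refine ⟨?_, h1, by linarith⟩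
    rw [hr, Int.cast_zero, sub_zero, abs_lt]
    exact ⟨h1, h2⟩

lemma vol_Q_Ioc (p n : ℕ) (hp : 0 < p)
    (hS : ∀ t : ℝ, volume (E p n ∩ Ioc t (t + 1)) = (3 : ℝ≥0∞)⁻¹ ^ n) (c : ℝ) :
    volume ((fun x => (p : ℝ) * x) ⁻¹' E p n ∩ Ioc c (c + 1/p))
      = ENNReal.ofReal (1/(p : ℝ)) * (3 : ℝ≥0∞)⁻¹ ^ n := by
  have hp' : (0 : ℝ) < p := by exact_mod_cast hp
  have h : (fun x => (p : ℝ) * x) ⁻¹' E p n ∩ Ioc c (c + 1/p)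
      = (fun x => (p : ℝ) * x) ⁻¹' (E p n ∩ Ioc ((p : ℝ) * c) ((p : ℝ) * c + 1)) := by
    ext x
    simp only [mem_inter_iff, mem_preimage, mem_Ioc]
    refine and_congr_right fun _ => ?_
    rw [mul_lt_mul_iff_right₀ hp']
    have hpp : (p : ℝ) * (1/(p : ℝ)) = 1 := mul_one_div_cancel hp'.ne'
    constructor
    · rintro ⟨hx1, hx2⟩
      exact ⟨hx1, by nlinarith [mul_le_mul_of_nonneg_left hx2 hp'.le]⟩
    · rintro ⟨hx1, hx2⟩
      refine ⟨hx1, le_of_mul_le_mul_left ?_ hp'⟩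
      nlinarith
  rw [h, Real.volume_preimage_mul_left hp'.ne' _, hS]
  rw [abs_of_pos (inv_pos.mpr hp'), one_div]

lemma vol_Q_Ioc_mul (p n : ℕ) (hp : 0 < p)
    (hS : ∀ t : ℝ, volume (E p n ∩ Ioc t (t + 1)) = (3 : ℝ≥0∞)⁻¹ ^ n) :
    ∀ (m : ℕ) (c : ℝ),
      volume ((fun x => (p : ℝ) * x) ⁻¹' E p n ∩ Ioc c (c + m * (1/p)))
        = m * (ENNReal.ofReal (1/(p : ℝ)) * (3 : ℝ≥0∞)⁻¹ ^ n) := by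
  have hp' : (0 : ℝ) < p := by exact_mod_cast hp
  intro m
  induction m with
  | zero => intro c; simp
  | succ m ih =>
    intro c
    have h0 : (0:ℝ) < 1/(p:ℝ) := by positivity
    have h1 : c ≤ c + m * (1/(p:ℝ)) := by nlinarith
    have hsplit : Ioc c (c + ((m : ℕ) + 1 : ℕ) * (1/(p:ℝ)))
        = Ioc c (c + m * (1/(p:ℝ))) ∪ Ioc (c + m * (1/(p:ℝ))) (c + m * (1/(p:ℝ)) + 1/(p:ℝ)) := by
      rw [Set.Ioc_union_Ioc_eq_Ioc h1 (by linarith)]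
      congr 1
      push_cast
      ring
    rw [hsplit, Set.inter_union_distrib_left]
    have hQ : MeasurableSet ((fun x => (p : ℝ) * x) ⁻¹' E p n) :=
      (measurableSet_E p n).preimage (measurable_const_mul _)
    rw [measure_union ?_ (hQ.inter measurableSet_Ioc)]
    · rw [ih c, vol_Q_Ioc p n hp hS (c + m * (1/(p:ℝ)))]
      push_cast
      ring
    · refine (Set.Ioc_disjoint_Ioc.mpr ?_).mono inter_subset_right inter_subset_right
      simp [le_max_iff]

lemma vol_S (p m : ℕ) (hm : 0 < m) (hpm : p = 3 * m) :
    ∀ n, volume (S p n) = (3 : ℝ≥0∞)⁻¹ ^ n := by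
  intro n
  induction n with
  | zero =>
    have h : S p 0 = Set.univ := by ext w; simp [S]
    rw [h, pow_zero]
    exact UnitAddCircle.measure_univ
  | succ n ih =>
    have hp : 0 < p := by omega
    have hp' : (0 : ℝ) < p := by exact_mod_cast hp
    have hS : ∀ t : ℝ, volume (E p n ∩ Ioc t (t + 1)) = (3 : ℝ≥0∞)⁻¹ ^ n := fun t => by
      rw [← vol_S_eq, ih]
    rw [vol_S_eq p (n + 1) (-(1/6))]
    rw [show (-(1/6) : ℝ) + 1 = 5/6 by norm_num, E_succ]
    rw [Set.inter_right_comm, E_one_inter, Set.inter_comm]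
    set Q := (fun x => (p : ℝ) * x) ⁻¹' E p n with hQdef
    have hIoo : volume (Q ∩ Ioo (-(1/6) : ℝ) (1/6)) = volume (Q ∩ Ioc (-(1/6) : ℝ) (1/6)) := by
      refine le_antisymm (measure_mono (inter_subset_inter_right _ Ioo_subset_Ioc_self)) ?_
      calc volume (Q ∩ Ioc (-(1/6) : ℝ) (1/6))
          ≤ volume ((Q ∩ Ioo (-(1/6) : ℝ) (1/6)) ∪ {(1/6 : ℝ)}) := by
            refine measure_mono fun x hx => ?_
            rcases hx with ⟨hxQ, hx1, hx2⟩
            rcases lt_or_eq_of_le hx2 with h | h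
            · exact Or.inl ⟨hxQ, hx1, h⟩
            · exact Or.inr h
        _ ≤ volume (Q ∩ Ioo (-(1/6) : ℝ) (1/6)) + volume ({(1/6 : ℝ)} : Set ℝ) :=
            measure_union_le _ _
        _ = volume (Q ∩ Ioo (-(1/6) : ℝ) (1/6)) := by simp
    rw [hIoo]
    have hend : (1/6 : ℝ) = -(1/6) + m * (1/(p : ℝ)) := by
      have hm' : (0:ℝ) < m := by exact_mod_cast hm
      rw [hpm]
      push_cast
      field_simp
      ring
    nth_rewrite 2 [hend]
    rw [vol_Q_Ioc_mul p n hp hS m (-(1/6))]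
    have hkey : (m : ℝ≥0∞) * ENNReal.ofReal (1/(p : ℝ)) = (3 : ℝ≥0∞)⁻¹ := by
      have hm' : (0:ℝ) < m := by exact_mod_cast hm
      rw [show ((m : ℝ≥0∞)) = ENNReal.ofReal (m : ℝ) by
        rw [ENNReal.ofReal_natCast], ← ENNReal.ofReal_mul (by positivity)]
      have : (m : ℝ) * (1/(p : ℝ)) = 1/3 := by
        rw [hpm]; push_cast; field_simp
      rw [this, one_div, ENNReal.ofReal_inv_of_pos (by norm_num)]
      norm_num
    rw [← mul_assoc, hkey, pow_succ, mul_comm]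

end BowenAux

/-- For every `p = 6^ℓ` with `ℓ ≥ 1`, every `y ∈ 𝕋` and every positive integer `n`,
the Bowen ball for the map `f_p : x ↦ px` satisfies `μ(B_n(y, 1/6)) = 3^{-n}`. -/
theorem measure_bowenBall (ℓ : ℕ) (hℓ : 1 ≤ ℓ) (y : UnitAddCircle) (n : ℕ) (hn : 0 < n) :
    volume (bowenBall (timesMap (6 ^ ℓ)) n y (1/6)) = (3 : ℝ≥0∞)⁻¹ ^ n := by
  set p := 6 ^ ℓ with hpdef
  have iter : ∀ (i : ℕ) (x : UnitAddCircle), (timesMap p)^[i] x = (p ^ i) • x := by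
    intro i
    induction i with
    | zero => intro x; simp
    | succ i ih =>
      intro x
      rw [Function.iterate_succ_apply', ih, timesMap, pow_succ', mul_smul]
  have hball : bowenBall (timesMap p) n y (1/6) = (fun z => z + (-y)) ⁻¹' BowenAux.S p n := by
    ext z
    simp only [bowenBall, BowenAux.S, Set.mem_setOf_eq, Set.mem_preimage]
    refine forall₂_congr fun i _ => ?_
    rw [iter, iter, dist_eq_norm, ← norm_neg]
    congr 1
    rw [← sub_eq_add_neg, smul_sub]
    abel
  rw [hball, measure_preimage_add_right volume (-y) _]
  refine BowenAux.vol_S p (2 * 6 ^ (ℓ - 1)) (by positivity) ?_ n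
  have h6 : (6:ℕ) ^ ℓ = 6 ^ (ℓ - 1) * 6 := by
    rw [← pow_succ]
    congr 1
    omega
  rw [hpdef, h6]
  ring
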